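/- For a real symmetric positive semidefinite matrix F, if a unit vector w satisfies wᵀFw = trace F, then F = (trace F) · w wᵀ, i.e., F is rank at most one with range spanned by w. -/

import Mathlib

/-!
Let `Q = w w*` be the orthogonal projection onto `w` and `P = 1 - Q`. Then
`tr (F P) = tr F - w* F w = 0`, while `tr (F P) = tr (P* F P)`; writing `F = C* C` this is
`‖C P‖²` in the Frobenius norm, so `C P = 0` and hence `F P = 0`. Thus `F = F Q`, and taking
adjoints `F = Q F`, so `F = Q F Q = (w* F w) Q = (tr F) Q`.
-/

open scoped RealInnerProductSpace

open scoped ComplexOrder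

namespace Matrix

section CommSemiring

variable {α n : Type*} [CommSemiring α] [Fintype n]

theorem isIdempotentElem_vecMulVec {u v : n → α} (h : v ⬝ᵥ u = 1) :
    IsIdempotentElem (vecMulVec u v) := by
  rw [IsIdempotentElem, vecMulVec_mul_vecMulVec, h, one_smul]

theorem trace_mul_vecMulVec (A : Matrix n n α) (x y : n → α) :
    (A * vecMulVec x y).trace = y ⬝ᵥ A *ᵥ x := by
  rw [mul_vecMulVec, trace_vecMulVec, dotProduct_comm]

theorem vecMulVec_mul_mul_vecMulVec (u v x y : n → α) (A : Matrix n n α) :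
    vecMulVec u v * A * vecMulVec x y = (v ⬝ᵥ A *ᵥ x) • vecMulVec u y := by
  rw [Matrix.mul_assoc, mul_vecMulVec, vecMulVec_mul_vecMulVec, vecMulVec_smul]

end CommSemiring

variable {𝕜 m n : Type*} [RCLike 𝕜] [Fintype n]

open scoped MatrixOrder in
theorem PosSemidef.trace_conjTranspose_mul_mul_eq_zero_iff [Fintype m] {A : Matrix n n 𝕜}
    (hA : A.PosSemidef) (B : Matrix n m 𝕜) : (Bᴴ * A * B).trace = 0 ↔ A * B = 0 := by
  classical
  refine ⟨fun h ↦ ?_, fun h ↦ by rw [Matrix.mul_assoc, h, Matrix.mul_zero, trace_zero]⟩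
  obtain ⟨C, rfl⟩ := CStarAlgebra.nonneg_iff_eq_star_mul_self.mp hA.nonneg
  have hCB : C * B = 0 := by
    rwa [star_eq_conjTranspose, ← Matrix.mul_assoc, Matrix.mul_assoc _ C, ← conjTranspose_mul,
      trace_conjTranspose_mul_self_eq_zero_iff] at h
  rw [Matrix.mul_assoc, hCB, Matrix.mul_zero]

theorem PosSemidef.mul_eq_zero_of_trace_mul_eq_zero {A P : Matrix n n 𝕜} (hA : A.PosSemidef)
    (hP : P.IsHermitian) (hPP : IsIdempotentElem P) (h : (A * P).trace = 0) : A * P = 0 := by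
  rw [← hA.trace_conjTranspose_mul_mul_eq_zero_iff, hP.eq, trace_mul_comm, ← Matrix.mul_assoc,
    hPP.eq, trace_mul_comm, h]

theorem PosSemidef.eq_trace_smul_vecMulVec [DecidableEq n] {A : Matrix n n 𝕜} (hA : A.PosSemidef)
    {w : n → 𝕜} (hw : star w ⬝ᵥ w = 1) (hwA : star w ⬝ᵥ A *ᵥ w = A.trace) :
    A = A.trace • vecMulVec w (star w) := by
  set Q := vecMulVec w (star w)
  have hQ : Q.IsHermitian := (posSemidef_vecMulVec_self_star w).isHermitian
  have hAQ : A * Q = A := by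
    have hAP := hA.mul_eq_zero_of_trace_mul_eq_zero (isHermitian_one.sub hQ)
      (isIdempotentElem_vecMulVec hw).one_sub
      (by rw [Matrix.mul_sub, Matrix.mul_one, trace_sub, trace_mul_vecMulVec, hwA, sub_self])
    rwa [Matrix.mul_sub, Matrix.mul_one, sub_eq_zero, eq_comm] at hAP
  have hQA : Q * A = A := by
    simpa only [conjTranspose_mul, hQ.eq, hA.isHermitian.eq] using congrArg (·ᴴ) hAQ
  calc A = Q * A * Q := by rw [hQA, hAQ]
    _ = A.trace • Q := by rw [vecMulVec_mul_mul_vecMulVec, hwA]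

end Matrix

theorem rank_one_of_saturation_general (N : ℕ) (F : Matrix (Fin N) (Fin N) ℝ)
    (hpsd : F.PosSemidef)
    (w : EuclideanSpace ℝ (Fin N)) (hw : ‖w‖ = 1)
    (hwF : ⟪w, (WithLp.toLp 2 (F.mulVec w) : EuclideanSpace ℝ (Fin N))⟫ = Matrix.trace F) :
    ∀ i j, F i j = Matrix.trace F * w i * w j := by
  have hunit : star (WithLp.ofLp w) ⬝ᵥ WithLp.ofLp w = 1 := by
    rw [dotProduct_comm, ← EuclideanSpace.inner_eq_star_dotProduct, real_inner_self_eq_norm_sq,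
      hw, one_pow]
  have hsat : star (WithLp.ofLp w) ⬝ᵥ F.mulVec (WithLp.ofLp w) = F.trace := by
    rwa [dotProduct_comm, ← EuclideanSpace.inner_toLp_toLp]
  intro i j
  rw [congrFun₂ (hpsd.eq_trace_smul_vecMulVec hunit hsat) i j, Matrix.smul_apply,
    Matrix.vecMulVec_apply, star_trivial, smul_eq_mul, mul_assoc]

theorem rank_one_of_saturation (N : ℕ) (F : Matrix (Fin N) (Fin N) ℝ)
    (hsymm : F.IsSymm) (hpsd : F.PosSemidef)
    (w : EuclideanSpace ℝ (Fin N)) (hw : ‖w‖ = 1)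
    (hwF : ⟪w, (WithLp.toLp 2 (F.mulVec w) : EuclideanSpace ℝ (Fin N))⟫ = Matrix.trace F) :
    ∀ i j, F i j = Matrix.trace F * w i * w j :=
  rank_one_of_saturation_general N F hpsd w hw hwF
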